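/- arXiv:1210.5012 — 2 statements merged into one kernel-verified Lean document; each statement's English description precedes it below -/
import Mathlib

section
/- (Truthfulness of MultiMUE double auction, buyer side) Let Q*(B, A) be the maximum of Σ_{(i,j) ∈ M} max_{0 ≤ n ≤ N_j} (b_{ij}(n) - a_j(n)) over all partial matchings M between the MUE set I and femtocell set J, with optimal matching σ and optimal quantities n*_{iσ(i)}. Suppose winning MUE i with true valuation vectors v_{ij} pays p_i = b_{i,σ(i)}(n*_{i,σ(i)}) - (Q* - Q*_{-i}), where Q*_{-i} is the optimum with MUE i removed, and obtains utility u_i = v_{i,σ(i)}(n*_{i,σ(i)}) - p_i. Then with all other bids and asks fixed, MUE i's utility from bidding truthfully (b_{ij} = v_{ij} for all j) is at least its utility from any false bid vectors b'_{ij}. -/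
/-- A one-to-one partial matching between MUEs and femtocells: distinct pairs
share no MUE and no femtocell. -/
def IsMatching {I J : Type*} (M : Finset (I × J)) : Prop :=
  ∀ p ∈ M, ∀ q ∈ M, p ≠ q → p.1 ≠ q.1 ∧ p.2 ≠ q.2

/-- Total system efficiency Σ_{(i,j)∈M} max_{0 ≤ n ≤ N_j} (b_{ij}(n) - a_j(n))
of a matching M, for bid profile B and ask profile a. -/
noncomputable def mval {I J : Type*} (B : I → J → ℕ → ℝ) (a : J → ℕ → ℝ)
    (N : J → ℕ) (M : Finset (I × J)) : ℝ :=
  ∑ p ∈ M, (Finset.range (N p.2 + 1)).sup'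
    (Finset.nonempty_range_iff.mpr (Nat.succ_ne_zero _))
    (fun n => B p.1 p.2 n - a p.2 n)

/-!
VCG argument. Without `i`, the optimum `Q*₋ᵢ` does not depend on `i`'s bids, so
MUE `i`'s utility is `v(n) - b'(n) + Q*(b')` for the pair it wins. Re-valuing the
matching won under `b'` at the true valuation `v` raises its efficiency by at least
`v(n) - b'(n)`, and the result is still at most the truthful optimum `Q*(v)`.
-/

section
variable {I J : Type*} [DecidableEq I]
  (B : I → J → ℕ → ℝ) (a : J → ℕ → ℝ) (N : J → ℕ) (i : I)

lemma mval_update_of_forall_ne (f : J → ℕ → ℝ) {M : Finset (I × J)}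
    (hM : ∀ p ∈ M, p.1 ≠ i) :
    mval (Function.update B i f) a N M = mval B a N M :=
  Finset.sum_congr rfl fun p hp => by rw [Function.update_of_ne (hM p hp)]

lemma mval_update_eq_sup'_add [DecidableEq J] (f : J → ℕ → ℝ) {M : Finset (I × J)}
    (hM : IsMatching M) {j : J} (hij : (i, j) ∈ M) :
    mval (Function.update B i f) a N M =
      (Finset.range (N j + 1)).sup'
        (Finset.nonempty_range_iff.mpr (Nat.succ_ne_zero _))
        (fun n => f j n - a j n)
      + mval B a N (M.erase (i, j)) := by
  rw [mval, ← Finset.add_sum_erase _ _ hij, Function.update_self]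
  congr 1
  refine Finset.sum_congr rfl fun p hp => ?_
  have hpi : p.1 ≠ i :=
    (hM p (Finset.mem_of_mem_erase hp) (i, j) hij (Finset.ne_of_mem_erase hp)).1
  rw [Function.update_of_ne hpi]

lemma mval_update_sub_le_mval_update_sub (f g : J → ℕ → ℝ) {M : Finset (I × J)}
    (hM : IsMatching M) {j : J} (hij : (i, j) ∈ M) {n : ℕ} (hn : n ≤ N j)
    (hgmax : g j n - a j n =
      (Finset.range (N j + 1)).sup'
        (Finset.nonempty_range_iff.mpr (Nat.succ_ne_zero _))
        (fun n => g j n - a j n)) :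
    mval (Function.update B i g) a N M - g j n
      ≤ mval (Function.update B i f) a N M - f j n := by
  classical
  have hf : f j n - a j n ≤
      (Finset.range (N j + 1)).sup'
        (Finset.nonempty_range_iff.mpr (Nat.succ_ne_zero _))
        (fun n => f j n - a j n) :=
    Finset.le_sup' (fun n => f j n - a j n) (Finset.mem_range.mpr (Nat.lt_succ_of_le hn))
  rw [mval_update_eq_sup'_add B a N i g hM hij, mval_update_eq_sup'_add B a N i f hM hij]
  linarith

lemma mval_update_eq_of_optimal_without (f g : J → ℕ → ℝ) {Mf Mg : Finset (I × J)}
    (hMf : IsMatching Mf) (hMfi : ∀ p ∈ Mf, p.1 ≠ i)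
    (hMfopt : ∀ M, IsMatching M → (∀ p ∈ M, p.1 ≠ i) →
      mval (Function.update B i f) a N M ≤ mval (Function.update B i f) a N Mf)
    (hMg : IsMatching Mg) (hMgi : ∀ p ∈ Mg, p.1 ≠ i)
    (hMgopt : ∀ M, IsMatching M → (∀ p ∈ M, p.1 ≠ i) →
      mval (Function.update B i g) a N M ≤ mval (Function.update B i g) a N Mg) :
    mval (Function.update B i f) a N Mf = mval (Function.update B i g) a N Mg := by
  have hfg := hMfopt Mg hMg hMgi
  have hgf := hMgopt Mf hMf hMfi
  simp only [mval_update_of_forall_ne B a N i _ hMfi, mval_update_of_forall_ne B a N i _ hMgi]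
    at hfg hgf ⊢
  exact le_antisymm hgf hfg

end

theorem stmt5_general {I J : Type*} [DecidableEq I]
    (B : I → J → ℕ → ℝ) (a : J → ℕ → ℝ) (N : J → ℕ) (i : I)
    (v b' : J → ℕ → ℝ)
    (Mv Mb Mmv Mmb : Finset (I × J)) (jv jb : J) (nv nb : ℕ)
    -- optimal matching under truthful bids of i
    (hMvopt : ∀ M, IsMatching M →
      mval (Function.update B i v) a N M ≤ mval (Function.update B i v) a N Mv)
    -- optimal matching under false bids b' of i
    (hMb : IsMatching Mb)
    -- MUE i wins in both cases, with partner σ(i) and optimal quantity n*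
    (hwinb : (i, jb) ∈ Mb)
    (hnb : nb ≤ N jb)
    (hnbmax : b' jb nb - a jb nb =
      (Finset.range (N jb + 1)).sup'
        (Finset.nonempty_range_iff.mpr (Nat.succ_ne_zero _))
        (fun n => b' jb n - a jb n))
    -- optimum with MUE i removed, truthful profile
    (hMmv : IsMatching Mmv) (hMmvni : ∀ p ∈ Mmv, p.1 ≠ i)
    (hMmvopt : ∀ M, IsMatching M → (∀ p ∈ M, p.1 ≠ i) →
      mval (Function.update B i v) a N M ≤ mval (Function.update B i v) a N Mmv)
    -- optimum with MUE i removed, false profile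
    (hMmb : IsMatching Mmb) (hMmbni : ∀ p ∈ Mmb, p.1 ≠ i)
    (hMmbopt : ∀ M, IsMatching M → (∀ p ∈ M, p.1 ≠ i) →
      mval (Function.update B i b') a N M ≤ mval (Function.update B i b') a N Mmb) :
    -- utility from false bids  ≤  utility from truthful bids
    v jb nb - (b' jb nb -
        (mval (Function.update B i b') a N Mb - mval (Function.update B i b') a N Mmb))
      ≤ v jv nv - (v jv nv -
        (mval (Function.update B i v) a N Mv - mval (Function.update B i v) a N Mmv)) := by
  have hwithout := mval_update_eq_of_optimal_without B a N i v b'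
    hMmv hMmvni hMmvopt hMmb hMmbni hMmbopt
  have hrevalue := mval_update_sub_le_mval_update_sub B a N i v b' hMb hwinb hnb hnbmax
  have htruthful := hMvopt Mb hMb
  linarith

/-- Truthfulness of the MultiMUE double auction, buyer side:
with all other bids and asks fixed, MUE i's utility from bidding its true
valuations v is at least its utility from any false bid vectors b'. -/
theorem stmt5 {I J : Type*} [DecidableEq I]
    (B : I → J → ℕ → ℝ) (a : J → ℕ → ℝ) (N : J → ℕ) (i : I)
    (v b' : J → ℕ → ℝ)
    (hv0 : ∀ j, v j 0 = 0) (hb'0 : ∀ j, b' j 0 = 0) (ha0 : ∀ j, a j 0 = 0)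
    (Mv Mb Mmv Mmb : Finset (I × J)) (jv jb : J) (nv nb : ℕ)
    -- optimal matching under truthful bids of i
    (hMv : IsMatching Mv)
    (hMvopt : ∀ M, IsMatching M →
      mval (Function.update B i v) a N M ≤ mval (Function.update B i v) a N Mv)
    -- optimal matching under false bids b' of i
    (hMb : IsMatching Mb)
    (hMbopt : ∀ M, IsMatching M →
      mval (Function.update B i b') a N M ≤ mval (Function.update B i b') a N Mb)
    -- MUE i wins in both cases, with partner σ(i) and optimal quantity n*
    (hwinv : (i, jv) ∈ Mv) (hwinb : (i, jb) ∈ Mb)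
    (hnv : nv ≤ N jv) (hnb : nb ≤ N jb)
    (hnvmax : v jv nv - a jv nv =
      (Finset.range (N jv + 1)).sup'
        (Finset.nonempty_range_iff.mpr (Nat.succ_ne_zero _))
        (fun n => v jv n - a jv n))
    (hnbmax : b' jb nb - a jb nb =
      (Finset.range (N jb + 1)).sup'
        (Finset.nonempty_range_iff.mpr (Nat.succ_ne_zero _))
        (fun n => b' jb n - a jb n))
    -- optimum with MUE i removed, truthful profile
    (hMmv : IsMatching Mmv) (hMmvni : ∀ p ∈ Mmv, p.1 ≠ i)
    (hMmvopt : ∀ M, IsMatching M → (∀ p ∈ M, p.1 ≠ i) →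
      mval (Function.update B i v) a N M ≤ mval (Function.update B i v) a N Mmv)
    -- optimum with MUE i removed, false profile
    (hMmb : IsMatching Mmb) (hMmbni : ∀ p ∈ Mmb, p.1 ≠ i)
    (hMmbopt : ∀ M, IsMatching M → (∀ p ∈ M, p.1 ≠ i) →
      mval (Function.update B i b') a N M ≤ mval (Function.update B i b') a N Mmb) :
    -- utility from false bids  ≤  utility from truthful bids
    v jb nb - (b' jb nb -
        (mval (Function.update B i b') a N Mb - mval (Function.update B i b') a N Mmb))
      ≤ v jv nv - (v jv nv -
        (mval (Function.update B i v) a N Mv - mval (Function.update B i v) a N Mmv)) :=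
  stmt5_general B a N i v b' Mv Mb Mmv Mmb jv jb nv nb hMvopt hMb hwinb hnb hnbmax hMmv hMmvni
    hMmvopt hMmb hMmbni hMmbopt
end

section
/- The MultiMUE winner-determination problem — maximize Σ_{i,j} (b_{ij}(n_{ij}) - a_j(n_{ij})) over nonnegative integers n_{ij} ≤ N_j subject to the constraints Σ_i n_{ij} = max_i n_{ij} for every j and Σ_j n_{ij} = max_j n_{ij} for every i — has the same optimal value as the maximum-weight partial matching problem on the complete bipartite graph between I and J with edge weights w_{ij} = max(0, max_{0 ≤ n ≤ N_j} (b_{ij}(n) - a_j(n))), where all bid/ask vectors satisfy b_{ij}(0) = a_j(0) = 0. -/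
open Finset

theorem IsMatching.mono {I J : Type*} {M M' : Finset (I × J)} (hM : IsMatching M)
    (h : M' ⊆ M) : IsMatching M' :=
  fun p hp q hq => hM p (h hp) q (h hq)

theorem isMatching_empty {I J : Type*} : IsMatching (∅ : Finset (I × J)) := by
  simp [IsMatching]

namespace Finset

variable {ι : Type*} {s : Finset ι} {f : ι → ℕ}

theorem eq_zero_of_sum_eq_sup (h : ∑ i ∈ s, f i = s.sup f) {k : ι} (hks : k ∈ s)
    (hk : f k = s.sup f) {l : ι} (hl : l ∈ s) (hlk : l ≠ k) : f l = 0 := by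
  classical
  have : f l + f k ≤ ∑ i ∈ s, f i := by
    rw [← sum_pair hlk]
    exact sum_le_sum_of_subset (by simp [insert_subset_iff, hl, hks])
  omega

theorem sum_eq_sup_iff :
    ∑ i ∈ s, f i = s.sup f ↔ ∀ i ∈ s, ∀ j ∈ s, f i ≠ 0 → f j ≠ 0 → i = j := by
  constructor
  · intro h i hi j hj hfi hfj
    obtain ⟨k, hks, hk⟩ := exists_mem_eq_sup s ⟨i, hi⟩ f
    have hik : i = k := by_contra fun hik => hfi (eq_zero_of_sum_eq_sup h hks hk.symm hi hik)
    have hjk : j = k := by_contra fun hjk => hfj (eq_zero_of_sum_eq_sup h hks hk.symm hj hjk)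
    rw [hik, hjk]
  · intro h
    by_cases hzero : ∀ i ∈ s, f i = 0
    · rw [sum_eq_zero hzero, (Finset.sup_eq_bot_iff f s).mpr hzero]
      rfl
    push Not at hzero
    obtain ⟨i₀, hi₀, hfi₀⟩ := hzero
    have hother : ∀ i ∈ s, i ≠ i₀ → f i = 0 :=
      fun i hi hne => by_contra fun hfi => hne (h i hi i₀ hi₀ hfi hfi₀)
    rw [sum_eq_single_of_mem i₀ hi₀ hother]
    refine le_antisymm (le_sup hi₀) (Finset.sup_le fun i hi => ?_)
    by_cases hi₀' : i = i₀
    · rw [hi₀']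
    · simp [hother i hi hi₀']

end Finset

noncomputable def maxGain (g : ℕ → ℝ) (m : ℕ) : ℝ :=
  (range (m + 1)).sup' (nonempty_range_iff.mpr (Nat.succ_ne_zero _)) g

theorem le_maxGain (g : ℕ → ℝ) {k m : ℕ} (hk : k ≤ m) : g k ≤ maxGain g m :=
  le_sup' g (mem_range.mpr (Nat.lt_succ_of_le hk))

theorem exists_eq_maxGain (g : ℕ → ℝ) (m : ℕ) : ∃ k ≤ m, g k = maxGain g m := by
  obtain ⟨k, hk, hmax⟩ := exists_mem_eq_sup' (nonempty_range_iff.mpr (Nat.succ_ne_zero m)) g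
  exact ⟨k, Nat.lt_succ_iff.mp (mem_range.mp hk), hmax.symm⟩

theorem maxGain_nonneg {g : ℕ → ℝ} (hg : g 0 = 0) (m : ℕ) : 0 ≤ maxGain g m :=
  hg ▸ le_maxGain g (Nat.zero_le m)

section Allocation

variable {I J : Type*} [Fintype I] [Fintype J]

def IsFeasible (N : J → ℕ) (n : I → J → ℕ) : Prop :=
  (∀ i j, n i j ≤ N j) ∧
    (∀ j, ∑ i, n i j = univ.sup (fun i => n i j)) ∧
    (∀ i, ∑ j, n i j = univ.sup (fun j => n i j))

def nonzeroEntries (n : I → J → ℕ) : Finset (I × J) :=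
  {p | n p.1 p.2 ≠ 0}

@[simp]
theorem mem_nonzeroEntries {n : I → J → ℕ} {p : I × J} :
    p ∈ nonzeroEntries n ↔ n p.1 p.2 ≠ 0 := by
  simp [nonzeroEntries]

theorem isMatching_nonzeroEntries_iff (n : I → J → ℕ) :
    IsMatching (nonzeroEntries n) ↔
      (∀ j, ∑ i, n i j = univ.sup (fun i => n i j)) ∧
        (∀ i, ∑ j, n i j = univ.sup (fun j => n i j)) := by
  simp only [sum_eq_sup_iff, mem_univ, true_implies]
  constructor
  · intro hM
    refine ⟨fun j i i' hi hi' => ?_, fun i j j' hj hj' => ?_⟩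
    · by_contra hne
      exact (hM (i, j) (by simpa using hi) (i', j) (by simpa using hi') (by simp [hne])).2 rfl
    · by_contra hne
      exact (hM (i, j) (by simpa using hj) (i, j') (by simpa using hj') (by simp [hne])).1 rfl
  · rintro ⟨hcol, hrow⟩ p hp q hq hpq
    rw [mem_nonzeroEntries] at hp hq
    refine ⟨fun h₁ => hpq (Prod.ext h₁ ?_), fun h₂ => hpq (Prod.ext ?_ h₂)⟩
    · exact hrow p.1 p.2 q.2 hp (h₁ ▸ hq)
    · exact hcol p.2 p.1 q.1 hp (h₂ ▸ hq)

variable {g : I → J → ℕ → ℝ}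

theorem sum_sum_eq_sum_nonzeroEntries (hg : ∀ i j, g i j 0 = 0) (n : I → J → ℕ) :
    ∑ i, ∑ j, g i j (n i j) = ∑ p ∈ nonzeroEntries n, g p.1 p.2 (n p.1 p.2) := by
  rw [← sum_product', eq_comm]
  refine sum_subset (subset_univ _) fun p _ hp => ?_
  rw [mem_nonzeroEntries, not_not] at hp
  rw [hp, hg]

theorem IsFeasible.exists_isMatching_le (hg : ∀ i j, g i j 0 = 0) {N : J → ℕ}
    {n : I → J → ℕ} (hn : IsFeasible N n) :
    ∃ M, IsMatching M ∧ ∑ i, ∑ j, g i j (n i j) ≤ ∑ p ∈ M, maxGain (g p.1 p.2) (N p.2) := by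
  refine ⟨nonzeroEntries n, (isMatching_nonzeroEntries_iff n).mpr hn.2, ?_⟩
  rw [sum_sum_eq_sum_nonzeroEntries hg]
  exact sum_le_sum fun p _ => le_maxGain _ (hn.1 p.1 p.2)

theorem IsMatching.exists_isFeasible_eq (hg : ∀ i j, g i j 0 = 0) (N : J → ℕ)
    {M : Finset (I × J)} (hM : IsMatching M) :
    ∃ n, IsFeasible N n ∧ ∑ i, ∑ j, g i j (n i j) = ∑ p ∈ M, maxGain (g p.1 p.2) (N p.2) := by
  classical
  choose k hkN hk using fun p : I × J => exists_eq_maxGain (g p.1 p.2) (N p.2)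
  set n : I → J → ℕ := fun i j => if (i, j) ∈ M then k (i, j) else 0
  have hsupp : nonzeroEntries n ⊆ M := fun p hp => by
    by_contra hpM
    simp [n, hpM] at hp
  refine ⟨n, ⟨fun i j => ?_, (isMatching_nonzeroEntries_iff n).mp (hM.mono hsupp)⟩, ?_⟩
  · by_cases hij : (i, j) ∈ M
    · simpa [n, hij] using hkN (i, j)
    · simp [n, hij]
  · rw [← sum_product', univ_product_univ, ← sum_subset (subset_univ M) fun p _ hp => by simp [n, hp, hg]]
    exact sum_congr rfl fun p hp => by simp [n, hp, hk]

end Allocation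

/-- the MultiMUE winner-determination integer program (maximize
Σ_{i,j} (b_{ij}(n_{ij}) - a_j(n_{ij})) subject to n_{ij} ≤ N_j,
Σ_i n_{ij} = max_i n_{ij} for every j, and Σ_j n_{ij} = max_j n_{ij} for every
i) has the same optimal value as maximum-weight partial matching on the
complete bipartite graph with weights
w_{ij} = max(0, max_{0 ≤ n ≤ N_j} (b_{ij}(n) - a_j(n))). -/
theorem stmt7 {I J : Type*} [Fintype I] [Fintype J]
    (B : I → J → ℕ → ℝ) (a : J → ℕ → ℝ) (N : J → ℕ)
    (hB0 : ∀ i j, B i j 0 = 0) (ha0 : ∀ j, a j 0 = 0) :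
    ∃ Q : ℝ,
      IsGreatest {x : ℝ | ∃ n : I → J → ℕ,
        ((∀ i j, n i j ≤ N j) ∧
         (∀ j, ∑ i, n i j = Finset.univ.sup (fun i => n i j)) ∧
         (∀ i, ∑ j, n i j = Finset.univ.sup (fun j => n i j))) ∧
        x = ∑ i, ∑ j, (B i j (n i j) - a j (n i j))} Q ∧
      IsGreatest {x : ℝ | ∃ M : Finset (I × J), IsMatching M ∧
        x = ∑ p ∈ M, max 0 ((Finset.range (N p.2 + 1)).sup'
          (Finset.nonempty_range_iff.mpr (Nat.succ_ne_zero _))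
          (fun n => B p.1 p.2 n - a p.2 n))} Q := by
  classical
  set g : I → J → ℕ → ℝ := fun i j n => B i j n - a j n
  have hg : ∀ i j, g i j 0 = 0 := fun i j => by simp [g, hB0, ha0]
  set W : Finset (I × J) → ℝ := fun M => ∑ p ∈ M, maxGain (g p.1 p.2) (N p.2)
  have hW : ∀ M : Finset (I × J), ∑ p ∈ M, max 0 ((Finset.range (N p.2 + 1)).sup'
      (Finset.nonempty_range_iff.mpr (Nat.succ_ne_zero _))
      (fun n => B p.1 p.2 n - a p.2 n)) = W M :=
    fun M => sum_congr rfl fun p _ => max_eq_right (maxGain_nonneg (hg p.1 p.2) (N p.2))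
  obtain ⟨M₀, hM₀, hmax⟩ := exists_max_image {M | IsMatching M} W ⟨∅, by simp [isMatching_empty]⟩
  rw [mem_filter_univ] at hM₀
  obtain ⟨n₀, hn₀, hval⟩ := hM₀.exists_isFeasible_eq hg N
  refine ⟨W M₀, ⟨⟨n₀, hn₀, hval.symm⟩, ?_⟩, ⟨⟨M₀, hM₀, (hW M₀).symm⟩, ?_⟩⟩
  · rintro _ ⟨n, hn, rfl⟩
    obtain ⟨M, hM, hle⟩ := IsFeasible.exists_isMatching_le hg hn
    exact hle.trans (hmax M ((mem_filter_univ M).mpr hM))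
  · rintro _ ⟨M, hM, rfl⟩
    exact (hW M).trans_le (hmax M ((mem_filter_univ M).mpr hM))
end
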